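/- (Sufficient and necessary condition for retrograde ballistic capture.) Assume 0 < r_f < 1 and r_f³ ≤ 2μ. For every α ∈ ℝ and every V ≥ 0, let C = W(α) − V² denote the Jacobi energy of the retrograde insertion state R(α,V). Then the Keplerian energy with respect to the Moon of R(α,V) satisfies E ≤ 0 if and only if C_R*(α) ≤ C ≤ W(α), where C_R*(α) = G(α) − 2r_f² − 2√(2μ·r_f). -/

import Mathlib

/-- Keplerian energy with respect to the Moon. -/
noncomputable def kepE (μ x y u v : ℝ) : ℝ :=
  (1 / 2) * ((u - y) ^ 2 + (v + x + μ - 1) ^ 2)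
    - μ / Real.sqrt ((x + μ - 1) ^ 2 + y ^ 2)

/-- The function W(α). -/
noncomputable def Wfun (μ rf α : ℝ) : ℝ :=
  (rf * Real.cos α + 1 - μ) ^ 2 + (rf * Real.sin α) ^ 2
    + 2 * (1 - μ) / Real.sqrt (1 + 2 * rf * Real.cos α + rf ^ 2)
    + 2 * μ / rf + μ * (1 - μ)

/-- The function G(α). -/
noncomputable def Gfun (μ rf α : ℝ) : ℝ :=
  2 * rf ^ 2 + 2 * (1 - μ) * (rf * Real.cos α + 1 - μ)
    + (1 - μ) * (2 * μ - 1)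
    + 2 * (1 - μ) / Real.sqrt (1 + 2 * rf * Real.cos α + rf ^ 2)

/-- Critical Jacobi energy for retrograde insertion. -/
noncomputable def CRstar (μ rf α : ℝ) : ℝ :=
  Gfun μ rf α - 2 * rf ^ 2 - 2 * Real.sqrt (2 * μ * rf)

set_option maxHeartbeats 1000000 in
/-- Sufficient and necessary condition for retrograde ballistic capture. -/
theorem retrograde_ballistic_capture_iff
    (μ rf : ℝ) (hμ0 : 0 < μ) (hμ1 : μ < 1) (hrf0 : 0 < rf) (hrf1 : rf < 1)
    (hrf3 : rf ^ 3 ≤ 2 * μ) (α V : ℝ) (hV : 0 ≤ V) :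
    kepE μ (rf * Real.cos α + 1 - μ) (rf * Real.sin α)
        (V * Real.sin α) (-V * Real.cos α) ≤ 0
      ↔ (CRstar μ rf α ≤ Wfun μ rf α - V ^ 2 ∧ Wfun μ rf α - V ^ 2 ≤ Wfun μ rf α) := by
  have hc := Real.sin_sq_add_cos_sq α
  set s := Real.sqrt (2 * μ / rf) with hs
  have hs0 : 0 ≤ s := Real.sqrt_nonneg _
  have hs2 : s ^ 2 = 2 * μ / rf := Real.sq_sqrt (by positivity)
  have hsr : rf ≤ s := by
    rw [hs, show (2 : ℝ) * μ / rf = 2 * μ / rf from rfl]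
    refine le_trans (le_of_eq (Real.sqrt_sq hrf0.le).symm) (Real.sqrt_le_sqrt ?_)
    rw [le_div_iff₀ hrf0]
    nlinarith
  have hsqrt : Real.sqrt (2 * μ * rf) = rf * s := by
    rw [hs, show 2 * μ * rf = (2 * μ / rf) * rf ^ 2 by field_simp,
      Real.sqrt_mul (by positivity), Real.sqrt_sq hrf0.le]
    ring
  have h1 : (rf * Real.cos α + 1 - μ + μ - 1) ^ 2 + (rf * Real.sin α) ^ 2 = rf ^ 2 := by
    linear_combination rf ^ 2 * hc
  have hE : kepE μ (rf * Real.cos α + 1 - μ) (rf * Real.sin α)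
      (V * Real.sin α) (-V * Real.cos α) = (1/2) * (V - rf) ^ 2 - μ / rf := by
    unfold kepE
    rw [h1, Real.sqrt_sq hrf0.le]
    have : (V * Real.sin α - rf * Real.sin α) ^ 2
        + (-V * Real.cos α + (rf * Real.cos α + 1 - μ) + μ - 1) ^ 2 = (V - rf) ^ 2 := by
      linear_combination (V - rf) ^ 2 * hc
    rw [this]
  rw [hE]
  have hWG : Wfun μ rf α - CRstar μ rf α = rf ^ 2 + 2 * μ / rf + 2 * rf * s := by
    unfold Wfun CRstar Gfun
    rw [hsqrt]
    linear_combination rf ^ 2 * hc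
  constructor
  · intro h
    have h' : (V - rf) ^ 2 ≤ s ^ 2 := by
      rw [hs2, show 2 * μ / rf = 2 * (μ / rf) by ring]
      linarith
    have hVle : V ≤ rf + s := by nlinarith [h', hs0]
    have hV2 : V ^ 2 ≤ rf ^ 2 + 2 * rf * s + s ^ 2 := by nlinarith
    constructor
    · have : s ^ 2 = 2 * (μ / rf) := by rw [hs2]; ring
      linarith [hWG, hV2, this]
    · nlinarith [sq_nonneg V]
  · rintro ⟨h1', _⟩
    have hV2 : V ^ 2 ≤ rf ^ 2 + 2 * μ / rf + 2 * rf * s := by linarith [hWG]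
    have hV2' : V ^ 2 ≤ (rf + s) ^ 2 := by
      have : s ^ 2 = 2 * μ / rf := hs2
      nlinarith
    have hVle : V ≤ rf + s := by nlinarith [hV2', hrf0, hs0]
    have h' : (V - rf) ^ 2 ≤ s ^ 2 := by nlinarith [hVle, hsr, hV]
    rw [hs2, show 2 * μ / rf = 2 * (μ / rf) by ring] at h'
    linarith
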